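/- Let μ be any Möbius function for 𝒢 and let a, n, k be positive integers. Then: (i) μ(H, B_{k^n}) = 0 for every finite simple graph H with |H| < kn − 1; and (ii) if n(k − 1) ≥ 2, then μ(K_{a+n}, B_{1^a,k^n}) = 0. -/

import Mathlib

/-!
If `C` is the unique coatom of the interval `[H, G]`, then `[H, G) = [H, C]`, and comparing the
defining sums over the two intervals gives `μ(H, G) = 0` (provided `H ≇ C`). When
`|H| + 1 < |G|`, every proper induced subgraph of `G` lies in some vertex-deleted `G - w`, so
`G - v` is such a coatom as soon as all the `G - w` containing `H` are images of `G - v` under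
automorphisms of `G`. This holds for every `H` when `G = B_{k^n}`, which is vertex-transitive.
For `G = B_{1^a,k^n}` and `H = K_{a+n}`: a clique of `a + n` vertices meets all `a + n` parts, so
`K_{a+n} ⊴ G - w` forces `w` into a part of size `k`, and all those vertices form one orbit;
`n(k - 1) ≥ 2` is exactly `|H| + 1 < |G|`.
-/

open SimpleGraph

/-- A finite simple graph, encoded by its number of vertices together with a
simple graph structure on `Fin n`. -/
def FinGraph : Type := Σ n : ℕ, SimpleGraph (Fin n)

namespace FinGraph

/-- The number of vertices of a graph. -/
def order (G : FinGraph) : ℕ := G.1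

/-- Induced containment `H ⊴ G`: there is an injection of the vertices of `H`
into the vertices of `G` which preserves and reflects adjacency (equivalently,
`H` is isomorphic to an induced subgraph of `G`). -/
def Contains (H G : FinGraph) : Prop :=
  ∃ f : Fin H.1 ↪ Fin G.1, ∀ a b : Fin H.1, G.2.Adj (f a) (f b) ↔ H.2.Adj a b

/-- Isomorphism of finite graphs. -/
def Iso (H G : FinGraph) : Prop := Nonempty (H.2 ≃g G.2)

/-- Package a simple graph on an arbitrary finite vertex type as a `FinGraph`. -/
noncomputable def of {V : Type} [Fintype V] (G : SimpleGraph V) : FinGraph :=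
  ⟨Fintype.card V, G.comap ⇑(Fintype.equivFin V).symm⟩

end FinGraph

/-- `T` is a transversal of the interval `[H,G]`: every member lies in `[H,G]`,
distinct members are non-isomorphic, and every graph in `[H,G]` is isomorphic to
a member of `T`. -/
def IsTransversal (H G : FinGraph) (T : Finset FinGraph) : Prop :=
  (∀ X ∈ T, H.Contains X ∧ X.Contains G) ∧
  (∀ X ∈ T, ∀ Y ∈ T, X ≠ Y → ¬ X.Iso Y) ∧
  (∀ X : FinGraph, H.Contains X → X.Contains G → ∃ Y ∈ T, X.Iso Y)

/-- `mu` is a Möbius function for the poset `𝒢` of all finite simple graphs up to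
isomorphism, ordered by induced containment: it is isomorphism invariant, vanishes
on non-comparable pairs, and for every `H ⊴ G` the sum of `mu H ·` over any
transversal of `[H,G]` is `1` if `H ≅ G` and `0` otherwise. -/
def IsMobius (mu : FinGraph → FinGraph → ℤ) : Prop :=
  (∀ H H' G G' : FinGraph, H.Iso H' → G.Iso G' → mu H G = mu H' G') ∧
  (∀ H G : FinGraph, ¬ H.Contains G → mu H G = 0) ∧
  (∀ H G : FinGraph, H.Contains G → ∀ T : Finset FinGraph, IsTransversal H G T →
    (H.Iso G → ∑ X ∈ T, mu H X = 1) ∧ (¬ H.Iso G → ∑ X ∈ T, mu H X = 0))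

/-- `B_{k^n}`: the complete multipartite graph with `n` parts of size `k`. -/
noncomputable def completeMultipartiteKN (n k : ℕ) : FinGraph :=
  FinGraph.of ((⊤ : SimpleGraph (Fin n)).comap (Prod.fst : Fin n × Fin k → Fin n))

/-- `B_{1^a,k^n}`: the complete multipartite graph with `a` parts of size `1`
and `n` parts of size `k`. -/
noncomputable def completeMultipartiteAKN (a n k : ℕ) : FinGraph :=
  FinGraph.of ((⊤ : SimpleGraph (Fin a ⊕ Fin n)).comap
    (Sum.map id Prod.fst : Fin a ⊕ Fin n × Fin k → Fin a ⊕ Fin n))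

namespace FinGraph

variable {F G H : FinGraph}

theorem contains_iff_nonempty_embedding : H.Contains G ↔ Nonempty (H.2 ↪g G.2) :=
  ⟨fun ⟨f, hf⟩ => ⟨⟨f, hf _ _⟩⟩, fun ⟨f⟩ => ⟨f.toEmbedding, fun _ _ => f.map_rel_iff⟩⟩

theorem Iso.refl (G : FinGraph) : G.Iso G := ⟨.refl⟩

theorem Iso.symm (h : G.Iso H) : H.Iso G := ⟨h.some.symm⟩

theorem Iso.trans (h : F.Iso G) (h' : G.Iso H) : F.Iso H := ⟨h.some.trans h'.some⟩

theorem Iso.order_eq (h : G.Iso H) : G.order = H.order := by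
  simpa [order] using Fintype.card_congr h.some.toEquiv

theorem Contains.refl (G : FinGraph) : G.Contains G :=
  contains_iff_nonempty_embedding.2 ⟨.refl⟩

theorem Contains.trans (h : F.Contains G) (h' : G.Contains H) : F.Contains H := by
  rw [contains_iff_nonempty_embedding] at *
  exact ⟨h'.some.comp h.some⟩

theorem Iso.contains (h : G.Iso H) : G.Contains H :=
  contains_iff_nonempty_embedding.2 ⟨h.some.toEmbedding⟩

theorem Contains.order_le (h : G.Contains H) : G.order ≤ H.order := by
  obtain ⟨f, -⟩ := h
  simpa [order] using Fintype.card_le_of_embedding f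

theorem Contains.iso_of_order_le (h : G.Contains H) (hle : H.order ≤ G.order) : G.Iso H := by
  have hcard : G.order = H.order := h.order_le.antisymm hle
  obtain ⟨f, hf⟩ := h
  have hbij : Function.Bijective f :=
    (Fintype.bijective_iff_injective_and_card f).2 ⟨f.injective, by simpa [order] using hcard⟩
  exact ⟨⟨Equiv.ofBijective f hbij, hf _ _⟩⟩

theorem Contains.antisymm (h : G.Contains H) (h' : H.Contains G) : G.Iso H :=
  h.iso_of_order_le h'.order_le

def isoSetoid : Setoid FinGraph := ⟨Iso, ⟨Iso.refl, Iso.symm, Iso.trans⟩⟩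

theorem exists_isTransversal (H G : FinGraph) : ∃ T, IsTransversal H G T := by
  classical
  let S : Finset FinGraph := ((Finset.range (G.order + 1)).sigma fun _ => Finset.univ).filter
    fun X => H.Contains X ∧ X.Contains G
  have mem_S {X : FinGraph} (hHX : H.Contains X) (hXG : X.Contains G) : X ∈ S :=
    Finset.mem_filter.2 ⟨Finset.mem_sigma.2 ⟨Finset.mem_range_succ_iff.2 hXG.order_le,
      Finset.mem_univ _⟩, hHX, hXG⟩
  let rep (X : FinGraph) : FinGraph := (Quotient.mk isoSetoid X).out
  have rep_iso (X : FinGraph) : (rep X).Iso X := Quotient.mk_out (s := isoSetoid) X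
  refine ⟨S.image rep, ?_, ?_, fun X hHX hXG =>
    ⟨rep X, Finset.mem_image_of_mem rep (mem_S hHX hXG), (rep_iso X).symm⟩⟩
  · simp only [Finset.mem_image, forall_exists_index, and_imp, forall_apply_eq_imp_iff₂]
    intro X hX
    obtain ⟨hHX, hXG⟩ := (Finset.mem_filter.1 hX).2
    exact ⟨hHX.trans (rep_iso X).symm.contains, (rep_iso X).contains.trans hXG⟩
  · simp only [Finset.mem_image, forall_exists_index, and_imp, forall_apply_eq_imp_iff₂]
    intro X _ Y _ hne hiso
    exact hne (congrArg Quotient.out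
      (Quotient.sound ((rep_iso X).symm.trans (hiso.trans (rep_iso Y)))))

section OfGraph

variable {V W : Type} [Fintype V] [Fintype W] {X : FinGraph}

noncomputable def ofIso (G : SimpleGraph V) : (of G).2 ≃g G :=
  Iso.comap (Fintype.equivFin V).symm G

theorem order_of (G : SimpleGraph V) : (of G).order = Fintype.card V := rfl

theorem contains_of_iff {G : SimpleGraph V} : X.Contains (of G) ↔ Nonempty (X.2 ↪g G) := by
  rw [contains_iff_nonempty_embedding]
  exact ⟨fun ⟨f⟩ => ⟨(ofIso G).toEmbedding.comp f⟩,
    fun ⟨f⟩ => ⟨(ofIso G).symm.toEmbedding.comp f⟩⟩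

theorem of_contains_iff {G : SimpleGraph V} : (of G).Contains X ↔ Nonempty (G ↪g X.2) := by
  rw [contains_iff_nonempty_embedding]
  exact ⟨fun ⟨f⟩ => ⟨f.comp (ofIso G).symm.toEmbedding⟩,
    fun ⟨f⟩ => ⟨f.comp (ofIso G).toEmbedding⟩⟩

theorem of_contains_of {G : SimpleGraph V} {G' : SimpleGraph W} (f : G ↪g G') :
    (of G).Contains (of G') :=
  of_contains_iff.2 ⟨(ofIso G').symm.toEmbedding.comp f⟩

theorem of_iso_of {G : SimpleGraph V} {G' : SimpleGraph W} (e : G ≃g G') : (of G).Iso (of G') :=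
  ⟨(ofIso G).trans (e.trans (ofIso G').symm)⟩

theorem of_induce_contains_of (G : SimpleGraph V) (s : Set V) [Fintype s] :
    (of (G.induce s)).Contains (of G) :=
  of_contains_of (Embedding.induce s)

end OfGraph

section DeleteVertex

variable {V : Type} [Fintype V] [DecidableEq V] (G : SimpleGraph V) {X : FinGraph}

theorem order_of_induce_compl_singleton (v : V) :
    (of (G.induce {v}ᶜ)).order = Fintype.card V - 1 := by
  rw [order_of, Fintype.card_compl_set]
  simp

theorem exists_contains_of_induce_compl_singleton (h : X.Contains (of G))
    (hlt : X.order < Fintype.card V) : ∃ w, X.Contains (of (G.induce {w}ᶜ)) := by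
  obtain ⟨f⟩ := contains_of_iff.1 h
  obtain ⟨w, hw⟩ : ∃ w, ∀ x, f x ≠ w := by
    by_contra! hsurj
    exact hlt.not_ge (by simpa [order] using Fintype.card_le_of_surjective f hsurj)
  exact ⟨w, contains_of_iff.2 ⟨⟨f.toEmbedding.codRestrict _ hw, f.map_rel_iff⟩⟩⟩

theorem of_induce_compl_singleton_iso (σ : G ≃g G) (w : V) :
    (of (G.induce {w}ᶜ)).Iso (of (G.induce {σ w}ᶜ)) := by
  refine of_iso_of
    (σ.induce ⟨fun x hx => ?_, σ.injective.injOn, fun y hy => ⟨σ.symm y, ?_, by simp⟩⟩)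
  · simpa using hx
  · simp only [Set.mem_compl_iff, Set.mem_singleton_iff] at hy ⊢
    rintro rfl
    simp at hy

end DeleteVertex

end FinGraph

namespace IsMobius

open FinGraph

variable {mu : FinGraph → FinGraph → ℤ}

theorem eq_zero_of_unique_coatom (hmu : IsMobius mu) {H C G : FinGraph} (hHC : H.Contains C)
    (hCG : C.Contains G) (hHC' : ¬ H.Iso C) (hCG' : ¬ C.Iso G)
    (hcoatom : ∀ X, H.Contains X → X.Contains G → ¬ X.Iso G → X.Contains C) :
    mu H G = 0 := by
  classical
  obtain ⟨T, hTmem, hTdisj, hTcover⟩ := exists_isTransversal H G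
  have hHG : H.Contains G := hHC.trans hCG
  obtain ⟨Y, hY, hGY⟩ := hTcover G hHG (.refl G)
  have hT' : IsTransversal H C (T.erase Y) := by
    refine ⟨fun X hX => ?_, fun X hX Z hZ =>
      hTdisj X (Finset.mem_of_mem_erase hX) Z (Finset.mem_of_mem_erase hZ), fun Z hHZ hZC => ?_⟩
    · obtain ⟨hne, hXT⟩ := Finset.mem_erase.1 hX
      obtain ⟨hHX, hXG⟩ := hTmem X hXT
      exact ⟨hHX, hcoatom X hHX hXG fun hXG' => hTdisj X hXT Y hY hne (hXG'.trans hGY)⟩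
    · obtain ⟨Y', hY', hZY'⟩ := hTcover Z hHZ (hZC.trans hCG)
      refine ⟨Y', Finset.mem_erase.2 ⟨?_, hY'⟩, hZY'⟩
      rintro rfl
      exact hCG' (hCG.antisymm ((hZY'.trans hGY.symm).symm.contains.trans hZC))
  have hsumG := (hmu.2.2 H G hHG T ⟨hTmem, hTdisj, hTcover⟩).2
    fun h => hCG' (hCG.antisymm (h.symm.contains.trans hHC))
  have hsumC := (hmu.2.2 H C hHC _ hT').2 hHC'
  rw [← Finset.add_sum_erase T _ hY, hsumC, add_zero] at hsumG
  rw [hmu.1 H H G Y (.refl H) hGY, hsumG]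

variable {V : Type} [Fintype V] [DecidableEq V]

theorem eq_zero_of_induce_compl_singleton_orbit (hmu : IsMobius mu) (G : SimpleGraph V)
    {H : FinGraph} (hcard : H.order + 1 < Fintype.card V)
    (horbit : ∀ v w, H.Contains (of (G.induce {v}ᶜ)) → H.Contains (of (G.induce {w}ᶜ)) →
      ∃ σ : G ≃g G, σ w = v) :
    mu H (of G) = 0 := by
  by_cases hHG : H.Contains (of G)
  swap
  · exact hmu.2.1 H _ hHG
  obtain ⟨v, hHv⟩ := exists_contains_of_induce_compl_singleton G hHG (by omega)
  have hCorder := order_of_induce_compl_singleton G v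
  refine hmu.eq_zero_of_unique_coatom hHv (of_induce_contains_of G {v}ᶜ)
    (fun h => by have := h.order_eq; omega)
    (fun h => by have := h.order_eq; rw [hCorder, order_of] at this; omega) ?_
  intro X hHX hXG hXG'
  have hlt : X.order < Fintype.card V :=
    hXG.order_le.lt_of_ne fun h => hXG' (hXG.iso_of_order_le h.ge)
  obtain ⟨w, hXw⟩ := exists_contains_of_induce_compl_singleton G hXG hlt
  obtain ⟨σ, rfl⟩ := horbit v w hHv (hHX.trans hXw)
  exact hXw.trans (of_induce_compl_singleton_iso G σ w).contains

end IsMobius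

section CompleteMultipartite

variable {U V W : Type} (π : V → W)

def comapTopAut (e : V ≃ V) (e' : W ≃ W) (he : ∀ x, π (e x) = e' (π x)) :
    (⊤ : SimpleGraph W).comap π ≃g (⊤ : SimpleGraph W).comap π where
  toEquiv := e
  map_rel_iff' := by simp [he, e'.injective.ne_iff]

@[simp]
theorem comapTopAut_apply (e : V ≃ V) (e' : W ≃ W) (he : ∀ x, π (e x) = e' (π x)) (x : V) :
    comapTopAut π e e' he x = e x := rfl

theorem exists_aut_comap_top_fst_apply_eq {A B : Type} [DecidableEq A] [DecidableEq B]
    (p q : A × B) :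
    ∃ σ : (⊤ : SimpleGraph A).comap (Prod.fst : A × B → A) ≃g (⊤ : SimpleGraph A).comap Prod.fst,
      σ p = q :=
  ⟨comapTopAut _ ((Equiv.swap p.1 q.1).prodCongr (Equiv.swap p.2 q.2)) (Equiv.swap p.1 q.1)
    (by simp), by simp [Prod.map]⟩

theorem exists_aut_comap_top_sumMap_inr_eq_inr {A B C : Type} [DecidableEq A] [DecidableEq B]
    (p q : A × B) :
    ∃ σ : (⊤ : SimpleGraph (C ⊕ A)).comap (Sum.map id Prod.fst : C ⊕ A × B → C ⊕ A) ≃g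
      (⊤ : SimpleGraph (C ⊕ A)).comap (Sum.map id Prod.fst), σ (.inr p) = .inr q :=
  ⟨comapTopAut _ (.sumCongr (.refl C) ((Equiv.swap p.1 q.1).prodCongr (Equiv.swap p.2 q.2)))
    (.sumCongr (.refl C) (Equiv.swap p.1 q.1)) (by rintro (_ | _) <;> simp), by simp [Prod.map]⟩

theorem card_lt_of_top_embedding_induce_compl [Fintype U] [Fintype W]
    {w : V} (hw : ∀ u, π u = π w → u = w)
    (f : (⊤ : SimpleGraph U) ↪g ((⊤ : SimpleGraph W).comap π).induce {w}ᶜ) :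
    Fintype.card U < Fintype.card W := by
  classical
  let g (x : U) : {y // y ≠ π w} := ⟨π (f x), fun h => (f x).2 (hw _ h)⟩
  have hg : Function.Injective g := by
    intro x y hxy
    by_contra hne
    exact (f.map_adj_iff.2 hne) (congrArg Subtype.val hxy)
  have := Fintype.card_le_of_injective g hg
  rw [Fintype.card_subtype_compl, Fintype.card_subtype_eq] at this
  have : 0 < Fintype.card W := Fintype.card_pos_iff.2 ⟨π w⟩
  omega

theorem exists_eq_inr_of_top_embedding_induce_compl {A B C : Type} [Fintype A] [Fintype C]
    [Fintype U] (hU : Fintype.card C + Fintype.card A ≤ Fintype.card U) {w : C ⊕ A × B}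
    (f : (⊤ : SimpleGraph U) ↪g
      ((⊤ : SimpleGraph (C ⊕ A)).comap (Sum.map id Prod.fst)).induce {w}ᶜ) :
    ∃ p, w = .inr p := by
  rcases w with c | p
  · have hsingleton : ∀ u : C ⊕ A × B, Sum.map id Prod.fst u = .inl c → u = .inl c := by
      rintro (_ | _) h <;> simp_all
    have := card_lt_of_top_embedding_induce_compl _ hsingleton f
    rw [Fintype.card_sum] at this
    omega
  · exact ⟨p, rfl⟩

end CompleteMultipartite

open FinGraph in
theorem mobius_completeMultipartite_general (mu : FinGraph → FinGraph → ℤ)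
    (hmu : IsMobius mu) (a n k : ℕ) :
    (∀ H : FinGraph, H.order + 1 < k * n → mu H (completeMultipartiteKN n k) = 0) ∧
    (2 ≤ n * (k - 1) →
      mu ⟨a + n, (⊤ : SimpleGraph (Fin (a + n)))⟩ (completeMultipartiteAKN a n k) = 0) := by
  refine ⟨fun H hH => ?_, fun hnk => ?_⟩
  · refine hmu.eq_zero_of_induce_compl_singleton_orbit _ ?_ fun v w _ _ =>
      exists_aut_comap_top_fst_apply_eq w v
    simpa [Nat.mul_comm] using hH
  · refine hmu.eq_zero_of_induce_compl_singleton_orbit _ ?_ fun v w hv hw => ?_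
    · simp only [order, Fintype.card_sum, Fintype.card_prod, Fintype.card_fin]
      rw [Nat.mul_sub_one] at hnk
      omega
    · obtain ⟨p, rfl⟩ := exists_eq_inr_of_top_embedding_induce_compl (by simp)
        (contains_of_iff.1 hw).some
      obtain ⟨q, rfl⟩ := exists_eq_inr_of_top_embedding_induce_compl (by simp)
        (contains_of_iff.1 hv).some
      exact exists_aut_comap_top_sumMap_inr_eq_inr p q

/-- `μ(H, B_{k^n}) = 0` for `|H| < kn - 1`, and `μ(K_{a+n}, B_{1^a,k^n}) = 0`
provided `n(k-1) ≥ 2`. -/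
theorem mobius_completeMultipartite (mu : FinGraph → FinGraph → ℤ)
    (hmu : IsMobius mu) (a n k : ℕ) (ha : 0 < a) (hn : 0 < n) (hk : 0 < k) :
    (∀ H : FinGraph, H.order + 1 < k * n → mu H (completeMultipartiteKN n k) = 0) ∧
    (2 ≤ n * (k - 1) →
      mu ⟨a + n, (⊤ : SimpleGraph (Fin (a + n)))⟩ (completeMultipartiteAKN a n k) = 0) :=
  mobius_completeMultipartite_general mu hmu a n k
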